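/- arXiv:math/0509205 — 2 statements merged into one kernel-verified Lean document; each statement's English description precedes it below -/
import Mathlib

section
/- Let n ≥ 1 be an integer. For each positive divisor r of n let γ_{1,2}(n,r) = (1/2)·Σ_{d ∣ (n/r)} μ(d) · Σ u², the inner sum ranging over triples (i_1, i_2, u) of positive integers with (i_1 + i_2)·u = n/(r·d). Then Σ_{r ∣ n} r·μ(r)·γ_{1,2}(n,r) = (n²/2)·Σ_{r ∣ n} μ(r)/r² − (n/2)·φ(n). -/
/-- `∑ u²` over triples `(i₁, i₂, u)` of positive integers with `(i₁ + i₂)·u = m`. -/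
def tripleSum (m : ℕ) : ℕ :=
  ∑ p ∈ (Finset.Ioc 0 m ×ˢ Finset.Ioc 0 m ×ˢ Finset.Ioc 0 m).filter
      (fun p => (p.1 + p.2.1) * p.2.2 = m),
    p.2.2 ^ 2

/-- `gamma12 n r = (1/2)·∑_{d ∣ n/r} μ(d)·∑_{(i₁+i₂)·u = n/(r·d)} u²`. -/
def gamma12 (n r : ℕ) : ℚ :=
  (1 / 2) * ∑ d ∈ (n / r).divisors,
    (ArithmeticFunction.moebius d : ℚ) * (tripleSum (n / (r * d)) : ℚ)


/-!
Writing `ι` for `n ↦ n`, counting the `s - 1` splittings `s = i₁ + i₂` gives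
`tripleSum = (ι - ζ) * ι²`, so the left-hand side is `½ ((ι·μ) * μ * (ι - ζ) * ι²)(n)`.
Pointwise multiplication by the completely multiplicative `ι` respects Dirichlet convolution,
hence `(ι·μ) * ι = ι·(μ * ζ) = 1` and `(ι·μ) * ι² = ι·(μ * ι) = ι·φ`; together with `μ * ζ = 1`
the convolution collapses to `μ * ι² - ι·φ`, and `(μ * ι²)(n) = n² ∑_{d ∣ n} μ(d)/d²`.
-/

open Finset
open scoped ArithmeticFunction.Moebius ArithmeticFunction.zeta

namespace ArithmeticFunction

variable {R : Type*}

theorem sub_apply [AddGroup R] (f g : ArithmeticFunction R) (n : ℕ) :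
    (f - g) n = f n - g n := by
  rw [sub_eq_add_neg, add_apply, neg_apply, sub_eq_add_neg]

theorem mul_apply_eq_sum_divisors [Semiring R] (f g : ArithmeticFunction R) (n : ℕ) :
    (f * g) n = ∑ d ∈ n.divisors, f d * g (n / d) := by
  rw [mul_apply, Nat.sum_divisorsAntidiagonal (fun a b => f a * g b)]

def totient : ArithmeticFunction ℕ := ⟨Nat.totient, Nat.totient_zero⟩

@[simp]
theorem totient_apply (n : ℕ) : totient n = n.totient := rfl

theorem zeta_mul_totient : (ζ * totient : ArithmeticFunction ℕ) = .id := by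
  ext n
  rw [zeta_mul_apply, id_apply]
  exact Nat.sum_totient n

theorem coe_moebius_mul_coe_id [Ring R] :
    (μ * ↑ArithmeticFunction.id : ArithmeticFunction R) = ↑totient := by
  rw [← zeta_mul_totient, natCoe_mul, ← mul_assoc, coe_moebius_mul_coe_zeta, one_mul]

section IdPmul

variable [CommSemiring R]

theorem id_pmul_mul_id_pmul (f g : ArithmeticFunction R) :
    (ArithmeticFunction.id : ArithmeticFunction R).pmul f *
        (ArithmeticFunction.id : ArithmeticFunction R).pmul g =
      (ArithmeticFunction.id : ArithmeticFunction R).pmul (f * g) := by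
  ext n
  simp only [mul_apply, pmul_apply, natCoe_apply, id_apply, Finset.mul_sum]
  refine sum_congr rfl fun x hx => ?_
  rw [← (Nat.mem_divisorsAntidiagonal.mp hx).1]
  push_cast
  ring

theorem id_pmul_one : (↑ArithmeticFunction.id : ArithmeticFunction R).pmul 1 = 1 := by
  ext n
  rcases eq_or_ne n 1 with rfl | hn
  · simp
  · simp [one_apply_ne hn]

theorem coe_pow_two : (↑(pow 2) : ArithmeticFunction R) =
    (↑ArithmeticFunction.id : ArithmeticFunction R).pmul ↑ArithmeticFunction.id := by
  ext n
  simp [pow_apply, sq]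

end IdPmul

variable [CommRing R]

theorem id_pmul_moebius_mul_id :
    (↑ArithmeticFunction.id : ArithmeticFunction R).pmul ↑μ * ↑ArithmeticFunction.id = 1 := by
  calc _ = (↑ArithmeticFunction.id : ArithmeticFunction R).pmul ↑μ *
        (ArithmeticFunction.id : ArithmeticFunction R).pmul ↑ζ := by rw [pmul_zeta]
    _ = 1 := by rw [id_pmul_mul_id_pmul, coe_moebius_mul_coe_zeta, id_pmul_one]

theorem id_pmul_moebius_mul_pow_two :
    (↑ArithmeticFunction.id : ArithmeticFunction R).pmul ↑μ * ↑(pow 2) =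
      (ArithmeticFunction.id : ArithmeticFunction R).pmul ↑totient := by
  rw [coe_pow_two, id_pmul_mul_id_pmul, coe_moebius_mul_coe_id]

theorem coe_moebius_mul_pow_two_apply {K : Type*} [Field K] [CharZero K] (n : ℕ) :
    (↑μ * ↑(pow 2) : ArithmeticFunction K) n = n ^ 2 * ∑ d ∈ n.divisors, (μ d : K) / d ^ 2 := by
  rw [mul_apply_eq_sum_divisors, Finset.mul_sum]
  refine sum_congr rfl fun d hd => ?_
  obtain ⟨hdn, hn⟩ := Nat.mem_divisors.mp hd
  have hd0 : (d : K) ≠ 0 := Nat.cast_ne_zero.mpr (ne_zero_of_dvd_ne_zero hn hdn)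
  simp only [intCoe_apply, natCoe_apply, pow_apply, OfNat.ofNat_ne_zero, false_and, if_false,
    Nat.cast_pow, Nat.cast_div hdn hd0]
  field_simp

end ArithmeticFunction

open ArithmeticFunction

theorem tripleSum_eq_sum_divisorsAntidiagonal (m : ℕ) :
    tripleSum m = ∑ x ∈ m.divisorsAntidiagonal, (x.1 - 1) * x.2 ^ 2 := by
  have hcard (x : ℕ × ℕ) : (x.1 - 1) * x.2 ^ 2 = ∑ _i ∈ Ioo 0 x.1, x.2 ^ 2 := by
    rw [sum_const, Nat.card_Ioo, smul_eq_mul, Nat.sub_zero]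
  simp only [hcard, sum_sigma', tripleSum]
  -- `(i₁, i₂, u) ↦ ((i₁ + i₂, u), i₁)`: a triple is fixed by `s = i₁ + i₂`, `u` and `0 < i₁ < s`
  refine sum_nbij' (fun p => ⟨(p.1 + p.2.1, p.2.2), p.1⟩) (fun x => (x.2, x.1.1 - x.2, x.1.2))
    ?_ ?_ ?_ ?_ (fun _ _ => rfl)
  · intro p hp
    simp only [mem_filter, mem_product, mem_Ioc] at hp
    simp only [mem_sigma, Nat.mem_divisorsAntidiagonal, mem_Ioo]
    omega
  · rintro ⟨⟨s, u⟩, i⟩ hx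
    simp only [mem_sigma, Nat.mem_divisorsAntidiagonal, mem_Ioo] at hx
    obtain ⟨⟨rfl, hm⟩, hi, his⟩ := hx
    have hu : 0 < u := Nat.pos_of_ne_zero (right_ne_zero_of_mul hm)
    have hs : s ≤ s * u := Nat.le_mul_of_pos_right s hu
    have hus : u ≤ s * u := Nat.le_mul_of_pos_left u (Nat.pos_of_ne_zero (left_ne_zero_of_mul hm))
    simp only [mem_filter, mem_product, mem_Ioc]
    refine ⟨by omega, ?_⟩
    rw [Nat.add_sub_cancel' his.le]
  · intro p _
    simp
  · rintro ⟨⟨s, u⟩, i⟩ hx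
    simp only [mem_sigma, Nat.mem_divisorsAntidiagonal, mem_Ioo] at hx
    simp [Nat.add_sub_cancel' hx.2.2.le]

theorem tripleSum_eq_apply (m : ℕ) :
    (tripleSum m : ℚ) = ((↑ArithmeticFunction.id - ζ) * ↑(pow 2) : ArithmeticFunction ℚ) m := by
  rw [tripleSum_eq_sum_divisorsAntidiagonal, mul_apply, Nat.cast_sum]
  refine sum_congr rfl fun x hx => ?_
  obtain ⟨hmul, hm⟩ := Nat.mem_divisorsAntidiagonal.mp hx
  have hx1 : x.1 ≠ 0 := left_ne_zero_of_mul (hmul ▸ hm)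
  simp [ArithmeticFunction.sub_apply, natCoe_apply, pow_apply, hx1,
    Nat.cast_sub (Nat.one_le_iff_ne_zero.mpr hx1)]

theorem gamma12_eq (n r : ℕ) :
    gamma12 n r =
      1 / 2 * (↑μ * ((↑ArithmeticFunction.id - ζ) * ↑(pow 2)) : ArithmeticFunction ℚ) (n / r) := by
  simp only [gamma12, mul_apply_eq_sum_divisors, tripleSum_eq_apply, intCoe_apply,
    Nat.div_div_eq_div_mul]

theorem stmt16_general (n : ℕ) :
    ∑ r ∈ n.divisors, (r : ℚ) * (ArithmeticFunction.moebius r : ℚ) * gamma12 n r =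
      (n : ℚ) ^ 2 / 2 *
          ∑ r ∈ n.divisors, (ArithmeticFunction.moebius r : ℚ) / (r : ℚ) ^ 2
        - (n : ℚ) / 2 * (Nat.totient n : ℚ) := by
  set ι : ArithmeticFunction ℚ := ↑ArithmeticFunction.id
  have hLHS : ∑ r ∈ n.divisors, (r : ℚ) * (μ r : ℚ) * gamma12 n r =
      1 / 2 * (ι.pmul ↑μ * (↑μ * ((ι - ζ) * ↑(pow 2)))) n := by
    rw [mul_apply_eq_sum_divisors, Finset.mul_sum]
    refine sum_congr rfl fun r _ => ?_
    rw [gamma12_eq, pmul_apply, natCoe_apply, id_apply, intCoe_apply]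
    ring
  have hconv : ι.pmul ↑μ * (↑μ * ((ι - ζ) * ↑(pow 2))) =
      ι.pmul ↑μ * ι * (↑μ * ↑(pow 2)) - ↑μ * ↑ζ * (ι.pmul ↑μ * ↑(pow 2)) := by
    ring
  rw [hLHS, hconv, id_pmul_moebius_mul_id, coe_moebius_mul_coe_zeta, id_pmul_moebius_mul_pow_two,
    one_mul, one_mul, ArithmeticFunction.sub_apply, coe_moebius_mul_pow_two_apply, pmul_apply]
  simp only [natCoe_apply, id_apply, totient_apply]
  ring

theorem stmt16 (n : ℕ) (hn : 1 ≤ n) :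
    ∑ r ∈ n.divisors, (r : ℚ) * (ArithmeticFunction.moebius r : ℚ) * gamma12 n r =
      (n : ℚ) ^ 2 / 2 *
          ∑ r ∈ n.divisors, (ArithmeticFunction.moebius r : ℚ) / (r : ℚ) ^ 2
        - (n : ℚ) / 2 * (Nat.totient n : ℚ) :=
  stmt16_general n
end

section
/- Let n ≥ 2 be an integer. For each positive divisor r of n let γ_{1,1}(n,r) = (1/2)·Σ_{d ∣ (n/r)} μ(d)·S_1(n/(r·d)), where S_1(m) = Σ_{(a,b) ∈ ℤ_{>0}², a + b = m} σ_1(a)·σ_1(b). Then Σ_{r ∣ n} r·μ(r)·γ_{1,1}(n,r) = ((5/24)·n³ − (1/4)·n²)·Σ_{r ∣ n} μ(r)/r². -/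
/-- Sum-of-divisors function: `sigma' k x = ∑_{d ∣ x} d^k` for positive `x`. -/
def sigma' (k x : ℕ) : ℕ := ∑ d ∈ x.divisors, d ^ k

/-- `Spair k n = ∑_{(a,b) ∈ ℤ_{>0}², k·a + b = n} σ₁(a)·σ₁(b)`. -/
def Spair (k n : ℕ) : ℕ :=
  ∑ p ∈ ((Finset.Ioc 0 n) ×ˢ (Finset.Ioc 0 n)).filter (fun p => k * p.1 + p.2 = n),
    sigma' 1 p.1 * sigma' 1 p.2

/-- `gamma11 n r = (1/2)·∑_{d ∣ n/r} μ(d)·S₁(n/(r·d))`. -/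
def gamma11 (n r : ℕ) : ℚ :=
  (1 / 2) * ∑ d ∈ (n / r).divisors,
    (ArithmeticFunction.moebius d : ℚ) * (Spair 1 (n / (r * d)) : ℚ)

/-!
Expanding `σ(u) σ(v) = ∑_{u = a x, v = b y} a b`, `S₁(n)` becomes the sum of `a b` over the
positive solutions of `a x + b y = n`. The symmetry `(a, b, x, y) ↦ (x, y, a, b)` and Liouville's
involution `(a, b, x, y) ↦ (x + y, x, b, a - b)` of the solutions with `a > b` reduce `2 S₁(n)` to
a sum over the solutions with `a = b`, which is a sum of power sums. This gives Besge's formula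
`12 S₁(n) = 5 σ₃(n) + σ₁(n) - 6 n σ₁(n)`. Substituted into `γ₁₁`, the Möbius sums collapse by
`μ * σ_k = id^k`, and the linear term vanishes because `∑_{r ∣ n} μ(r) = 0` for `n ≥ 2`.
-/

open Finset ArithmeticFunction
open scoped ArithmeticFunction.sigma ArithmeticFunction.Moebius

theorem sum_comp_of_involution {ι M : Type*} [AddCommMonoid M] {s : Finset ι} {g : ι → ι}
    (hg : ∀ i ∈ s, g i ∈ s) (hgg : ∀ i ∈ s, g (g i) = i) (f : ι → M) :
    ∑ i ∈ s, f (g i) = ∑ i ∈ s, f i :=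
  sum_nbij' g g hg hg hgg hgg fun _ _ => rfl

def quadruples (n : ℕ) : Finset ((ℕ × ℕ) × ℕ × ℕ) :=
  ((Ioc 0 n ×ˢ Ioc 0 n) ×ˢ (Ioc 0 n ×ˢ Ioc 0 n)).filter
    fun p => p.1.1 * p.2.1 + p.1.2 * p.2.2 = n

theorem mem_quadruples {n a b x y : ℕ} :
    ((a, b), (x, y)) ∈ quadruples n ↔
      0 < a ∧ 0 < b ∧ 0 < x ∧ 0 < y ∧ a * x + b * y = n := by
  simp only [quadruples, mem_filter, mem_product, mem_Ioc]
  constructor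
  · rintro ⟨⟨⟨⟨ha, -⟩, hb, -⟩, ⟨hx, -⟩, hy, -⟩, h⟩
    exact ⟨ha, hb, hx, hy, h⟩
  · rintro ⟨ha, hb, hx, hy, rfl⟩
    refine ⟨⟨⟨⟨ha, ?_⟩, hb, ?_⟩, ⟨hx, ?_⟩, hy, ?_⟩, rfl⟩ <;> nlinarith

theorem sigma_one_eq_sum_divisorsAntidiagonal (m : ℕ) :
    σ 1 m = ∑ q ∈ m.divisorsAntidiagonal, q.1 := by
  rw [sigma_one_apply, Nat.sum_divisorsAntidiagonal fun a _ => a]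

theorem sigma'_eq_sigma (k : ℕ) : sigma' k = σ k := by
  ext m
  rw [sigma', sigma_apply]

theorem Spair_one_eq_sum_quadruples (n : ℕ) :
    Spair 1 n = ∑ p ∈ quadruples n, p.1.1 * p.1.2 := by
  simp only [Spair, sigma'_eq_sigma, sigma_one_eq_sum_divisorsAntidiagonal, sum_mul_sum,
    ← sum_product', sum_sigma']
  symm
  refine sum_nbij' (fun p => ⟨(p.1.1 * p.2.1, p.1.2 * p.2.2), (p.1.1, p.2.1), (p.1.2, p.2.2)⟩)
    (fun q => ((q.2.1.1, q.2.2.1), (q.2.1.2, q.2.2.2))) ?_ ?_ ?_ ?_ fun _ _ => rfl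
  · rintro ⟨⟨a, b⟩, x, y⟩ hp
    obtain ⟨ha, hb, hx, hy, rfl⟩ := mem_quadruples.1 hp
    simp only [mem_sigma, mem_filter, mem_product, mem_Ioc, Nat.mem_divisorsAntidiagonal]
    refine ⟨⟨⟨⟨?_, ?_⟩, ?_, ?_⟩, by ring⟩, ⟨trivial, ?_⟩, trivial, ?_⟩ <;>
      first | positivity | omega
  · rintro ⟨⟨u, v⟩, ⟨a, x⟩, b, y⟩ hq
    simp only [mem_sigma, mem_filter, mem_product, mem_Ioc, Nat.mem_divisorsAntidiagonal] at hq
    obtain ⟨⟨-, huv⟩, ⟨rfl, hax⟩, rfl, hby⟩ := hq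
    simp only [ne_eq, mul_eq_zero, not_or] at hax hby
    show ((a, b), (x, y)) ∈ quadruples n
    exact mem_quadruples.2 ⟨by omega, by omega, by omega, by omega, by omega⟩
  · rintro ⟨⟨a, b⟩, x, y⟩ _; rfl
  · rintro ⟨⟨u, v⟩, ⟨a, x⟩, b, y⟩ hq
    simp only [mem_sigma, mem_filter, mem_product, mem_Ioc, Nat.mem_divisorsAntidiagonal] at hq
    obtain ⟨-, ⟨rfl, -⟩, rfl, -⟩ := hq
    rfl

theorem swap_mem_quadruples {n : ℕ} {p : (ℕ × ℕ) × ℕ × ℕ} (hp : p ∈ quadruples n) :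
    p.swap ∈ quadruples n := by
  obtain ⟨⟨a, b⟩, x, y⟩ := p
  obtain ⟨ha, hb, hx, hy, h⟩ := mem_quadruples.1 hp
  exact mem_quadruples.2 ⟨hx, hy, ha, hb, by rw [← h]; ring⟩

theorem sum_quadruples_swap {M : Type*} [AddCommMonoid M] (n : ℕ)
    (f : (ℕ × ℕ) × ℕ × ℕ → M) :
    ∑ p ∈ quadruples n, f p.swap = ∑ p ∈ quadruples n, f p :=
  sum_comp_of_involution (fun _ => swap_mem_quadruples) (fun p _ => p.swap_swap) f

def upperQuadruples (n : ℕ) : Finset ((ℕ × ℕ) × ℕ × ℕ) :=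
  (quadruples n).filter fun p => p.1.2 < p.1.1

def diagQuadruples (n : ℕ) : Finset ((ℕ × ℕ) × ℕ × ℕ) :=
  (quadruples n).filter fun p => p.1.1 = p.1.2

theorem mem_upperQuadruples {n a b x y : ℕ} :
    ((a, b), (x, y)) ∈ upperQuadruples n ↔
      0 < a ∧ 0 < b ∧ 0 < x ∧ 0 < y ∧ a * x + b * y = n ∧ b < a := by
  rw [upperQuadruples, mem_filter, mem_quadruples, and_assoc, and_assoc, and_assoc, and_assoc]

theorem sum_quadruples_eq_upper_add_diag {M : Type*} [AddCommMonoid M] (n : ℕ)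
    (f : (ℕ × ℕ) × ℕ × ℕ → M) :
    ∑ p ∈ quadruples n, f p =
      ∑ p ∈ upperQuadruples n, (f p + f (Prod.map Prod.swap Prod.swap p)) +
        ∑ p ∈ diagQuadruples n, f p := by
  have hlower : ∑ p ∈ (quadruples n).filter (fun p => p.1.1 < p.1.2), f p =
      ∑ p ∈ upperQuadruples n, f (Prod.map Prod.swap Prod.swap p) := by
    refine sum_nbij' (Prod.map Prod.swap Prod.swap) (Prod.map Prod.swap Prod.swap) ?_ ?_
      (fun _ _ => rfl) (fun _ _ => rfl) (fun _ _ => rfl) <;>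
    · rintro ⟨⟨a, b⟩, x, y⟩ hp
      simp only [upperQuadruples, mem_filter, mem_quadruples, Prod.map, Prod.swap] at hp ⊢
      obtain ⟨⟨ha, hb, hx, hy, h⟩, hlt⟩ := hp
      exact ⟨⟨hb, ha, hy, hx, by rw [← h]; ring⟩, hlt⟩
  rw [sum_add_distrib, ← hlower, upperQuadruples, diagQuadruples,
    ← sum_filter_add_sum_filter_not (quadruples n) (fun p => p.1.2 < p.1.1),
    ← sum_filter_add_sum_filter_not ((quadruples n).filter fun p => ¬p.1.2 < p.1.1)
      (fun p => p.1.1 < p.1.2), filter_filter, filter_filter, add_assoc]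
  congr 2 <;> exact sum_congr (filter_congr fun p _ => by omega) fun _ _ => rfl

def liouvilleMap (p : (ℕ × ℕ) × ℕ × ℕ) : (ℕ × ℕ) × ℕ × ℕ :=
  ((p.2.1 + p.2.2, p.2.1), (p.1.2, p.1.1 - p.1.2))

theorem liouvilleMap_mem {n : ℕ} {p : (ℕ × ℕ) × ℕ × ℕ} (hp : p ∈ upperQuadruples n) :
    liouvilleMap p ∈ upperQuadruples n := by
  obtain ⟨⟨a, b⟩, x, y⟩ := p
  obtain ⟨ha, hb, hx, hy, h, hba⟩ := mem_upperQuadruples.1 hp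
  show ((x + y, x), (b, a - b)) ∈ upperQuadruples n
  refine mem_upperQuadruples.2 ⟨by omega, hx, hb, by omega, ?_, by omega⟩
  obtain ⟨c, rfl⟩ := Nat.exists_eq_add_of_lt hba
  rw [← h, show b + c + 1 - b = c + 1 by omega]
  ring

theorem liouvilleMap_liouvilleMap {p : (ℕ × ℕ) × ℕ × ℕ} (h : p.1.2 < p.1.1) :
    liouvilleMap (liouvilleMap p) = p := by
  obtain ⟨⟨a, b⟩, x, y⟩ := p
  simp only [liouvilleMap, Prod.mk.injEq, and_true, true_and] at h ⊢
  omega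

theorem sum_upperQuadruples_liouvilleMap {M : Type*} [AddCommMonoid M] (n : ℕ)
    (f : (ℕ × ℕ) × ℕ × ℕ → M) :
    ∑ p ∈ upperQuadruples n, f (liouvilleMap p) = ∑ p ∈ upperQuadruples n, f p :=
  sum_comp_of_involution (fun _ => liouvilleMap_mem)
    (fun _ hp => liouvilleMap_liouvilleMap (mem_filter.1 hp).2) f

theorem sum_diagQuadruples {M : Type*} [AddCommMonoid M] (n : ℕ)
    (f : (ℕ × ℕ) × ℕ × ℕ → M) :
    ∑ p ∈ diagQuadruples n, f p =
      ∑ q ∈ n.divisorsAntidiagonal, ∑ x ∈ Ioo 0 q.2, f ((q.1, q.1), (x, q.2 - x)) := by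
  rw [sum_sigma']
  refine sum_nbij' (fun p => ⟨(p.1.1, p.2.1 + p.2.2), p.2.1⟩)
    (fun q => ((q.1.1, q.1.1), (q.2, q.1.2 - q.2))) ?_ ?_ ?_ ?_ ?_
  · rintro ⟨⟨a, b⟩, x, y⟩ hp
    simp only [diagQuadruples, mem_filter, mem_quadruples] at hp
    obtain ⟨⟨ha, -, hx, hy, h⟩, rfl⟩ := hp
    simp only [mem_sigma, Nat.mem_divisorsAntidiagonal, mem_Ioo]
    have := Nat.mul_pos ha hx
    exact ⟨⟨by rw [← h]; ring, by omega⟩, hx, by omega⟩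
  · rintro ⟨⟨d, m⟩, x⟩ hq
    simp only [mem_sigma, Nat.mem_divisorsAntidiagonal, mem_Ioo] at hq
    obtain ⟨⟨rfl, hdm⟩, hx, hxm⟩ := hq
    simp only [diagQuadruples, mem_filter, mem_quadruples, and_true]
    have hd := Nat.pos_of_ne_zero (left_ne_zero_of_mul hdm)
    refine ⟨hd, hd, hx, by omega, ?_⟩
    rw [← mul_add, Nat.add_sub_cancel' hxm.le]
  · rintro ⟨⟨a, b⟩, x, y⟩ hp
    obtain rfl : a = b := (mem_filter.1 hp).2
    simp
  · rintro ⟨⟨d, m⟩, x⟩ hq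
    simp only [mem_sigma, mem_Ioo] at hq
    simp only [Sigma.mk.injEq, Prod.mk.injEq, heq_eq_eq, true_and, and_true]
    omega
  · rintro ⟨⟨a, b⟩, x, y⟩ hp
    obtain rfl : a = b := (mem_filter.1 hp).2
    simp

theorem two_mul_sum_quadruples (n : ℕ) :
    2 * ∑ p ∈ quadruples n, ((p.1.1 : ℚ) * p.1.2) =
      ∑ p ∈ diagQuadruples n, (2 * (p.2.2 : ℚ) ^ 2 + p.2.1 * p.2.2 - (p.1.2 : ℚ) ^ 2) := by
  -- By the swap symmetry `G` has the same sum as `2 a b`; on the solutions with `a > b`, `G` plus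
  -- its flip is `2 (K - K ∘ liouvilleMap)`, whose sum vanishes since `liouvilleMap` is a bijection.
  set G : (ℕ × ℕ) × ℕ × ℕ → ℚ := fun p =>
    p.1.1 * p.1.2 + p.2.1 * p.2.2 + 2 * (p.2.2 : ℚ) ^ 2 - 2 * (p.1.2 : ℚ) ^ 2
  set K : (ℕ × ℕ) × ℕ × ℕ → ℚ := fun p =>
    (p.2.1 : ℚ) ^ 2 + p.2.1 * p.2.2 + (p.2.2 : ℚ) ^ 2
  have hprod := sum_quadruples_swap n fun p => (p.1.1 : ℚ) * p.1.2
  have hsq := sum_quadruples_swap n fun p => (p.2.2 : ℚ) ^ 2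
  have hupper : ∀ p ∈ upperQuadruples n,
      G p + G (Prod.map Prod.swap Prod.swap p) = 2 * (K p - K (liouvilleMap p)) := by
    rintro ⟨⟨a, b⟩, x, y⟩ hp
    have hba : b ≤ a := (mem_upperQuadruples.1 hp).2.2.2.2.2.le
    simp only [G, K, liouvilleMap, Prod.map, Prod.swap, Nat.cast_sub hba]
    ring
  have hdiag : ∀ p ∈ diagQuadruples n,
      G p = 2 * (p.2.2 : ℚ) ^ 2 + p.2.1 * p.2.2 - (p.1.2 : ℚ) ^ 2 := by
    rintro ⟨⟨a, b⟩, x, y⟩ hp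
    obtain rfl : a = b := (mem_filter.1 hp).2
    simp only [G]
    ring
  calc 2 * ∑ p ∈ quadruples n, ((p.1.1 : ℚ) * p.1.2) = ∑ p ∈ quadruples n, G p := by
        simp only [G, sum_add_distrib, sum_sub_distrib, ← mul_sum]
        simp only [Prod.fst_swap, Prod.snd_swap] at hprod hsq
        linarith
    _ = ∑ p ∈ diagQuadruples n, G p := by
        rw [sum_quadruples_eq_upper_add_diag, sum_congr rfl hupper, ← mul_sum, sum_sub_distrib,
          sum_upperQuadruples_liouvilleMap, sub_self, mul_zero, zero_add]
    _ = _ := sum_congr rfl hdiag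

theorem sum_range_cast (m : ℕ) : ∑ x ∈ range m, (x : ℚ) = m * (m - 1) / 2 := by
  induction m with
  | zero => simp
  | succ m ih => rw [sum_range_succ, ih]; push_cast; ring

theorem sum_range_cast_sq (m : ℕ) :
    ∑ x ∈ range m, (x : ℚ) ^ 2 = m * (m - 1) * (2 * m - 1) / 6 := by
  induction m with
  | zero => simp
  | succ m ih => rw [sum_range_succ, ih]; push_cast; ring

theorem sum_Ioo_diag_summand (d m : ℕ) (hm : 0 < m) :
    ∑ x ∈ Ioo 0 m, (2 * ((m - x : ℕ) : ℚ) ^ 2 + x * (m - x : ℕ) - (d : ℚ) ^ 2) =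
      5 / 6 * (m : ℚ) ^ 3 - (m : ℚ) ^ 2 + 1 / 6 * m - m * (d : ℚ) ^ 2 + (d : ℚ) ^ 2 := by
  set F : ℕ → ℚ := fun x => 2 * ((m - x : ℕ) : ℚ) ^ 2 + x * (m - x : ℕ) - (d : ℚ) ^ 2
  have hsplit : ∑ x ∈ range m, F x = F 0 + ∑ x ∈ Ioo 0 m, F x := by
    rw [range_eq_Ico, ← Ioo_insert_left hm, sum_insert left_notMem_Ioo]
  have hpoly : ∀ x ∈ range m, F x = 2 * (m : ℚ) ^ 2 - d ^ 2 - 3 * m * x + (x : ℚ) ^ 2 := by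
    intro x hx
    simp only [F, Nat.cast_sub (mem_range.1 hx).le]
    ring
  rw [sum_congr rfl hpoly, sum_add_distrib, sum_sub_distrib, sum_const, card_range, ← mul_sum,
    sum_range_cast, sum_range_cast_sq] at hsplit
  simp only [F, Nat.sub_zero, CharP.cast_eq_zero, nsmul_eq_mul] at hsplit ⊢
  linear_combination -hsplit

theorem sum_divisorsAntidiagonal_fst_pow {R : Type*} [Semiring R] (k n : ℕ) :
    ∑ q ∈ n.divisorsAntidiagonal, (q.1 : R) ^ k = σ k n := by
  rw [Nat.sum_divisorsAntidiagonal fun d _ => (d : R) ^ k, sigma_apply]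
  push_cast
  rfl

theorem sum_divisorsAntidiagonal_snd_pow {R : Type*} [Semiring R] (k n : ℕ) :
    ∑ q ∈ n.divisorsAntidiagonal, (q.2 : R) ^ k = σ k n := by
  rw [Nat.sum_divisorsAntidiagonal' fun _ m => (m : R) ^ k, sigma_apply]
  push_cast
  rfl

theorem Spair_one_eq_sigma (n : ℕ) :
    (Spair 1 n : ℚ) = 5 / 12 * σ 3 n + 1 / 12 * σ 1 n - 1 / 2 * n * σ 1 n := by
  have hσ₁ : ∑ q ∈ n.divisorsAntidiagonal, (q.1 : ℚ) = σ 1 n := by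
    simpa using sum_divisorsAntidiagonal_fst_pow (R := ℚ) 1 n
  have hσ₁' : ∑ q ∈ n.divisorsAntidiagonal, (q.2 : ℚ) = σ 1 n := by
    simpa using sum_divisorsAntidiagonal_snd_pow (R := ℚ) 1 n
  have hmix : ∑ q ∈ n.divisorsAntidiagonal, (q.2 : ℚ) * (q.1 : ℚ) ^ 2 = n * σ 1 n := by
    rw [← hσ₁, mul_sum]
    refine sum_congr rfl fun q hq => ?_
    rw [← (Nat.mem_divisorsAntidiagonal.1 hq).1]
    push_cast
    ring
  have hdiag : ∀ q ∈ n.divisorsAntidiagonal,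
      ∑ x ∈ Ioo 0 q.2, (2 * ((q.2 - x : ℕ) : ℚ) ^ 2 + x * (q.2 - x : ℕ) - (q.1 : ℚ) ^ 2) =
        5 / 6 * (q.2 : ℚ) ^ 3 - (q.2 : ℚ) ^ 2 + 1 / 6 * q.2 - q.2 * (q.1 : ℚ) ^ 2 +
          (q.1 : ℚ) ^ 2 := fun q hq =>
    sum_Ioo_diag_summand q.1 q.2
      (Nat.pos_of_mem_divisors (Nat.snd_mem_divisors_of_mem_antidiagonal hq))
  have h := two_mul_sum_quadruples n
  rw [sum_diagQuadruples, sum_congr rfl hdiag] at h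
  simp only [sum_add_distrib, sum_sub_distrib, ← mul_sum, hmix, hσ₁',
    sum_divisorsAntidiagonal_fst_pow, sum_divisorsAntidiagonal_snd_pow] at h
  rw [Spair_one_eq_sum_quadruples]
  push_cast
  linear_combination h / 2

theorem div_pos_of_mem_divisors {n r : ℕ} (hr : r ∈ n.divisors) : 0 < n / r :=
  Nat.div_pos (Nat.divisor_le hr) (Nat.pos_of_mem_divisors hr)

theorem cast_mul_cast_div_of_mem_divisors {R : Type*} [Semiring R] {n r : ℕ}
    (hr : r ∈ n.divisors) : (r : R) * ((n / r : ℕ) : R) = n := by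
  rw [← Nat.cast_mul, Nat.mul_div_cancel' (Nat.dvd_of_mem_divisors hr)]

theorem sum_mul_mul_cast_div_pow_succ {R : Type*} [CommSemiring R] (n k : ℕ) (f : ℕ → R) :
    ∑ r ∈ n.divisors, (r : R) * f r * ((n / r : ℕ) : R) ^ (k + 1) =
      n * ∑ r ∈ n.divisors, f r * ((n / r : ℕ) : R) ^ k := by
  rw [mul_sum]
  refine sum_congr rfl fun r hr => ?_
  rw [← cast_mul_cast_div_of_mem_divisors hr]
  ring

theorem sum_mul_cast_div_pow {K : Type*} [Field K] [CharZero K] (n k : ℕ) (f : ℕ → K) :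
    ∑ r ∈ n.divisors, f r * ((n / r : ℕ) : K) ^ k =
      n ^ k * ∑ r ∈ n.divisors, f r / r ^ k := by
  rw [mul_sum]
  refine sum_congr rfl fun r hr => ?_
  rw [Nat.cast_div_charZero (Nat.dvd_of_mem_divisors hr)]
  ring

theorem sum_divisors_moebius_eq_zero {R : Type*} [Ring R] {n : ℕ} (hn : n ≠ 1) :
    ∑ d ∈ n.divisors, (μ d : R) = 0 := by
  have h := congrArg (· n) (coe_moebius_mul_coe_zeta (R := R))
  simpa only [coe_mul_zeta_apply, intCoe_apply, one_apply_ne hn] using h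

theorem sum_divisors_moebius_mul_sigma_div {R : Type*} [Ring R] (k : ℕ) {m : ℕ} (hm : 0 < m) :
    ∑ d ∈ m.divisors, (μ d : R) * σ k (m / d) = (m : R) ^ k := by
  have h := (sum_eq_iff_sum_mul_moebius_eq (f := fun i => (i : R) ^ k)
    (g := fun i => (σ k i : R))).1 (fun i _ => by rw [sigma_apply]; push_cast; rfl) m hm
  rwa [Nat.sum_divisorsAntidiagonal fun a b => (μ a : R) * σ k b] at h

theorem mem_divisors_and_mem_divisors_div {n r d : ℕ} :
    r ∈ n.divisors ∧ d ∈ (n / r).divisors ↔ r * d ∣ n ∧ n ≠ 0 := by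
  constructor
  · rintro ⟨hr, hd⟩
    exact ⟨(Nat.dvd_div_iff_mul_dvd (Nat.dvd_of_mem_divisors hr)).1 (Nat.dvd_of_mem_divisors hd),
      Nat.ne_zero_of_mem_divisors hr⟩
  · rintro ⟨hrd, hn⟩
    have hr : r ∈ n.divisors := Nat.mem_divisors.2 ⟨(dvd_mul_right r d).trans hrd, hn⟩
    exact ⟨hr, Nat.mem_divisors.2 ⟨(Nat.dvd_div_iff_mul_dvd (Nat.dvd_of_mem_divisors hr)).2 hrd,
      (div_pos_of_mem_divisors hr).ne'⟩⟩

theorem sum_divisors_sum_divisors_div_comm {M : Type*} [AddCommMonoid M] (n : ℕ)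
    (f : ℕ → ℕ → M) :
    ∑ r ∈ n.divisors, ∑ d ∈ (n / r).divisors, f r d =
      ∑ d ∈ n.divisors, ∑ r ∈ (n / d).divisors, f r d :=
  sum_comm' fun r d => by
    rw [mem_divisors_and_mem_divisors_div, and_comm (a := r ∈ _),
      mem_divisors_and_mem_divisors_div, mul_comm]

theorem sum_mul_moebius_mul_sum_moebius_mul_id_sigma {R : Type*} [CommRing R] (n : ℕ) :
    ∑ r ∈ n.divisors, (r : R) * μ r *
        ∑ d ∈ (n / r).divisors, (μ d : R) * (((n / r / d : ℕ) : R) * σ 1 (n / r / d)) =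
      ∑ d ∈ n.divisors, (μ d : R) * ((n / d : ℕ) : R) ^ 2 := by
  simp_rw [mul_sum]
  rw [sum_divisors_sum_divisors_div_comm]
  refine sum_congr rfl fun d hd => ?_
  have hterm : ∀ r ∈ (n / d).divisors,
      (r : R) * μ r * ((μ d : R) * (((n / r / d : ℕ) : R) * σ 1 (n / r / d))) =
        (μ d : R) * ((n / d : ℕ) : R) * ((μ r : R) * σ 1 (n / d / r)) := by
    intro r hr
    rw [Nat.div_div_eq_div_mul, mul_comm r d, ← Nat.div_div_eq_div_mul]
    linear_combination ((μ d : R) * μ r * σ 1 (n / d / r)) *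
      cast_mul_cast_div_of_mem_divisors (R := R) hr
  rw [sum_congr rfl hterm, ← mul_sum,
    sum_divisors_moebius_mul_sigma_div 1 (div_pos_of_mem_divisors hd)]
  ring

theorem gamma11_eq {n r : ℕ} (h : 0 < n / r) :
    gamma11 n r = 5 / 24 * ((n / r : ℕ) : ℚ) ^ 3 + 1 / 24 * ((n / r : ℕ) : ℚ) -
      1 / 4 * ∑ d ∈ (n / r).divisors,
        (μ d : ℚ) * (((n / r / d : ℕ) : ℚ) * σ 1 (n / r / d)) := by
  have hterm : ∀ d ∈ (n / r).divisors, (μ d : ℚ) * (Spair 1 (n / (r * d)) : ℚ) =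
      5 / 12 * ((μ d : ℚ) * σ 3 (n / r / d)) + 1 / 12 * ((μ d : ℚ) * σ 1 (n / r / d)) -
        1 / 2 * ((μ d : ℚ) * (((n / r / d : ℕ) : ℚ) * σ 1 (n / r / d))) := by
    intro d _
    rw [← Nat.div_div_eq_div_mul, Spair_one_eq_sigma]
    ring
  rw [gamma11, sum_congr rfl hterm, sum_sub_distrib, sum_add_distrib, ← mul_sum, ← mul_sum,
    ← mul_sum, sum_divisors_moebius_mul_sigma_div 3 h, sum_divisors_moebius_mul_sigma_div 1 h]
  ring

theorem stmt17 (n : ℕ) (hn : 2 ≤ n) :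
    ∑ r ∈ n.divisors, (r : ℚ) * (ArithmeticFunction.moebius r : ℚ) * gamma11 n r =
      ((5 / 24) * (n : ℚ) ^ 3 - (1 / 4) * (n : ℚ) ^ 2) *
        ∑ r ∈ n.divisors, (ArithmeticFunction.moebius r : ℚ) / (r : ℚ) ^ 2 := by
  have hlin : ∑ r ∈ n.divisors, (r : ℚ) * μ r * ((n / r : ℕ) : ℚ) = 0 := by
    simpa [sum_divisors_moebius_eq_zero (R := ℚ) (n := n) (by omega)] using
      sum_mul_mul_cast_div_pow_succ n 0 fun r => (μ r : ℚ)
  calc _ = ∑ r ∈ n.divisors, (5 / 24 * ((r : ℚ) * μ r * ((n / r : ℕ) : ℚ) ^ 3) +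
        1 / 24 * ((r : ℚ) * μ r * ((n / r : ℕ) : ℚ)) - 1 / 4 * ((r : ℚ) * μ r *
          ∑ d ∈ (n / r).divisors,
            (μ d : ℚ) * (((n / r / d : ℕ) : ℚ) * σ 1 (n / r / d)))) :=
        sum_congr rfl fun r hr => by rw [gamma11_eq (div_pos_of_mem_divisors hr)]; ring
    _ = (5 / 24 * n - 1 / 4) * ∑ r ∈ n.divisors, (μ r : ℚ) * ((n / r : ℕ) : ℚ) ^ 2 := by
        rw [sum_sub_distrib, sum_add_distrib, ← mul_sum, ← mul_sum, ← mul_sum, hlin,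
          sum_mul_mul_cast_div_pow_succ n 2, sum_mul_moebius_mul_sum_moebius_mul_id_sigma]
        ring
    _ = _ := by
        rw [sum_mul_cast_div_pow]
        ring
end
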